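/- Let T > 0 and H be a real Hilbert space. If u : [0,T] → H is absolutely continuous with derivative u̇ ∈ L²(0,T;H) and satisfies the anti-periodicity condition u(0) = −u(T), then ‖u‖²_∞ ≤ (T/4) ∫₀ᵀ ‖u̇(t)‖² dt, where ‖u‖_∞ = sup_{t ∈ [0,T]} ‖u(t)‖. -/

import Mathlib

open MeasureTheory Set Filter Topology RealInnerProductSpace

noncomputable section

/-- `u` is an absolutely continuous path on `[0,T]` with derivative `u'` in `L²(0,T;F)`,
i.e. `u` belongs to the space `A²` with derivative `u'`. -/
def InA2 {F : Type*} [NormedAddCommGroup F] [NormedSpace ℝ F]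
    (T : ℝ) (u u' : ℝ → F) : Prop :=
  MemLp u' 2 (volume.restrict (Set.Ioc (0:ℝ) T)) ∧
  ∀ t ∈ Set.Icc (0:ℝ) T, u t = u 0 + ∫ s in (0:ℝ)..t, u' s

/-! Write `u t - u a = ∫ₐᵗ u'` and `u b - u t = ∫ₜᵇ u'`. Since `u a + u b = 0`, subtracting gives
`2 u t = ∫ₐᵗ u' - ∫ₜᵇ u'`, so `2 ‖u t‖ ≤ ∫ₐᵇ ‖u'‖`, and Cauchy–Schwarz bounds the square of the
right-hand side by `(b - a) ∫ₐᵇ ‖u'‖²`. -/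

theorem sq_integral_norm_le_measureReal_mul_integral_norm_sq {α E : Type*} [MeasurableSpace α]
    {μ : Measure α} [IsFiniteMeasure μ] [NormedAddCommGroup E] {f : α → E} (hf : MemLp f 2 μ) :
    (∫ x, ‖f x‖ ∂μ) ^ 2 ≤ μ.real univ * ∫ x, ‖f x‖ ^ 2 ∂μ := by
  have holder := integral_mul_le_Lp_mul_Lq_of_nonneg (f := fun x => ‖f x‖) (g := fun _ => 1)
    Real.HolderConjugate.two_two (.of_forall fun x => norm_nonneg (f x))
    (.of_forall fun _ => zero_le_one) (by simpa using hf.norm) (by simpa using memLp_const (1 : ℝ))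
  simp only [mul_one, one_pow, integral_const, smul_eq_mul, Real.rpow_two] at holder
  calc (∫ x, ‖f x‖ ∂μ) ^ 2
      ≤ ((∫ x, ‖f x‖ ^ 2 ∂μ) ^ (1 / 2 : ℝ) * μ.real univ ^ (1 / 2 : ℝ)) ^ 2 := by
        gcongr
    _ = μ.real univ * ∫ x, ‖f x‖ ^ 2 ∂μ := by
        rw [mul_pow, ← Real.sqrt_eq_rpow, ← Real.sqrt_eq_rpow, Real.sq_sqrt, Real.sq_sqrt,
          mul_comm] <;> positivity

theorem sq_sSup_image_le {α : Type*} {s : Set α} {f : α → ℝ} {C : ℝ} (hf : ∀ x ∈ s, 0 ≤ f x)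
    (hC : 0 ≤ C) (h : ∀ x ∈ s, f x ^ 2 ≤ C) : sSup (f '' s) ^ 2 ≤ C := by
  have hle : sSup (f '' s) ≤ √C := Real.sSup_le
    (forall_mem_image.2 fun x hx => Real.le_sqrt_of_sq_le (h x hx)) (Real.sqrt_nonneg C)
  have hnonneg : 0 ≤ sSup (f '' s) := Real.sSup_nonneg (forall_mem_image.2 hf)
  calc sSup (f '' s) ^ 2 ≤ √C ^ 2 := pow_le_pow_left₀ hnonneg hle 2
    _ = C := Real.sq_sqrt hC

section Antiperiodic

variable {E : Type*} [NormedAddCommGroup E] [NormedSpace ℝ E] {a b t : ℝ} {u u' : ℝ → E}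

theorem two_mul_norm_le_integral_norm_of_eq_neg (hu' : IntervalIntegrable u' volume a b)
    (hu : ∀ s ∈ Icc a b, u s = u a + ∫ r in a..s, u' r) (hap : u a = -u b) (ht : t ∈ Icc a b) :
    2 * ‖u t‖ ≤ ∫ s in a..b, ‖u' s‖ := by
  have hab : a ≤ b := ht.1.trans ht.2
  have hat : IntervalIntegrable u' volume a t :=
    hu'.mono_set (by rw [uIcc_of_le ht.1, uIcc_of_le hab]; exact Icc_subset_Icc_right ht.2)
  have htb : IntervalIntegrable u' volume t b :=
    hu'.mono_set (by rw [uIcc_of_le ht.2, uIcc_of_le hab]; exact Icc_subset_Icc_left ht.1)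
  have hb : u b = u a + ((∫ s in a..t, u' s) + ∫ s in t..b, u' s) := by
    rw [intervalIntegral.integral_add_adjacent_intervals hat htb]
    exact hu b ⟨hab, le_rfl⟩
  have hdouble : (2 : ℝ) • u t = (∫ s in a..t, u' s) - ∫ s in t..b, u' s := by
    linear_combination (norm := module) 2 • hu t ht + hap - hb
  calc 2 * ‖u t‖ = ‖(∫ s in a..t, u' s) - ∫ s in t..b, u' s‖ := by
        rw [← hdouble, norm_smul, Real.norm_two]
    _ ≤ (∫ s in a..t, ‖u' s‖) + ∫ s in t..b, ‖u' s‖ :=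
        (norm_sub_le _ _).trans <| add_le_add
          (intervalIntegral.norm_integral_le_integral_norm ht.1)
          (intervalIntegral.norm_integral_le_integral_norm ht.2)
    _ = ∫ s in a..b, ‖u' s‖ :=
        intervalIntegral.integral_add_adjacent_intervals hat.norm htb.norm

theorem norm_sq_le_of_eq_neg (hu' : MemLp u' 2 (volume.restrict (Ioc a b)))
    (hu : ∀ s ∈ Icc a b, u s = u a + ∫ r in a..s, u' r) (hap : u a = -u b) (ht : t ∈ Icc a b) :
    ‖u t‖ ^ 2 ≤ (b - a) / 4 * ∫ s in Ioc a b, ‖u' s‖ ^ 2 := by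
  have hab : a ≤ b := ht.1.trans ht.2
  have hint : IntervalIntegrable u' volume a b :=
    (intervalIntegrable_iff_integrableOn_Ioc_of_le hab).2 (hu'.integrable one_le_two)
  have htwo := two_mul_norm_le_integral_norm_of_eq_neg hint hu hap ht
  rw [intervalIntegral.integral_of_le hab] at htwo
  have hcs := sq_integral_norm_le_measureReal_mul_integral_norm_sq hu'
  rw [measureReal_restrict_apply_univ, Real.volume_real_Ioc_of_le hab] at hcs
  nlinarith [norm_nonneg (u t)]

end Antiperiodic

theorem antiperiodic_sup_bound_general
    {H : Type*} [NormedAddCommGroup H] [InnerProductSpace ℝ H]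
    (T : ℝ) (hT : 0 < T) (u u' : ℝ → H)
    (hu : InA2 T u u') (hap : u 0 = - u T) :
    (sSup ((fun t => ‖u t‖) '' Set.Icc (0:ℝ) T))^2 ≤
      T / 4 * ∫ t in Set.Ioc (0:ℝ) T, ‖u' t‖^2 := by
  have hbound : ∀ t ∈ Icc 0 T, ‖u t‖ ^ 2 ≤ T / 4 * ∫ s in Ioc 0 T, ‖u' s‖ ^ 2 := fun t ht => by
    simpa using norm_sq_le_of_eq_neg hu.1 hu.2 hap ht
  exact sq_sSup_image_le (fun t _ => norm_nonneg (u t))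
    (mul_nonneg (by positivity) (integral_nonneg fun t => sq_nonneg ‖u' t‖)) hbound

/-- Sobolev-type inequality for anti-periodic paths:
if `u ∈ A²_H` satisfies `u(0) = -u(T)` then `‖u‖²_∞ ≤ (T/4) ∫₀ᵀ ‖u̇‖²`. -/
theorem antiperiodic_sup_bound
    {H : Type*} [NormedAddCommGroup H] [InnerProductSpace ℝ H] [CompleteSpace H]
    (T : ℝ) (hT : 0 < T) (u u' : ℝ → H)
    (hu : InA2 T u u') (hap : u 0 = - u T) :
    (sSup ((fun t => ‖u t‖) '' Set.Icc (0:ℝ) T))^2 ≤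
      T / 4 * ∫ t in Set.Ioc (0:ℝ) T, ‖u' t‖^2 :=
  antiperiodic_sup_bound_general T hT u u' hu hap
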